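/- Let M be a matroid on a type α and let f, g : α → (Fin n → ZMod 2) be two rank-preserving maps from M into the complete binary matroid of rank n, i.e., for every set S of elements of M, the dimension of the 𝔽₂-linear span of f(S) and the dimension of the 𝔽₂-linear span of g(S) both equal rank_M(S). Then there exists an 𝔽₂-linear automorphism A of (Fin n → ZMod 2) such that f(x) = A(g(x)) for every element x in the ground set of M. -/

import Mathlib

open Set

noncomputable def mRank {α : Type*} (M : Matroid α) (S : Set α) : ℕ∞ :=
  ⨆ I ∈ {I : Set α | M.Indep I ∧ I ⊆ S}, I.encard

noncomputable def spanRank (K : Type*) [Field K] {W : Type*} [AddCommGroup W] [Module K W]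
    (S : Set W) : ℕ :=
  Module.finrank K (Submodule.span K S)

/-!
Fix a base `B` of `M`. Rank preservation says that `f x` lies in the span of `f '' T` exactly when
`x` lies in the matroid closure of `T`; in particular `f` and `g` are linearly independent on `B`,
so some automorphism `A` sends `g b` to `f b` for every `b ∈ B`. For `x ∈ M.E` both `A (g x)` and
`f x` lie in the span of `f '' B`, and for each `b ∈ B` the `b`-coordinate of either one vanishes
iff `x ∈ M.closure (B \ {b})`. Over `𝔽₂` a coordinate is determined by whether it vanishes, so
`A (g x) = f x`.
-/

open Module Submodule

theorem Module.Basis.sumExtend_apply_inl {K V ι : Type*} [DivisionRing K] [AddCommGroup V]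
    [Module K V] {v : ι → V} (hv : LinearIndependent K v) (i : ι) :
    Basis.sumExtend hv (Sum.inl i) = v i := by
  simp only [Basis.sumExtend, Basis.reindex_apply, Basis.extend_apply_self]
  rfl

theorem exists_linearEquiv_apply_eq {K V ι : Type*} [Field K] [AddCommGroup V] [Module K V]
    [FiniteDimensional K V] {v w : ι → V} (hv : LinearIndependent K v)
    (hw : LinearIndependent K w) : ∃ A : V ≃ₗ[K] V, ∀ i, A (w i) = v i := by
  have : Finite ι := hv.finite
  have : Finite (Basis.sumExtendIndex hv) :=
    have := Module.Finite.finite_basis (Basis.sumExtend hv)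
    Finite.of_injective (Sum.inr (α := ι)) Sum.inr_injective
  have : Finite (Basis.sumExtendIndex hw) :=
    have := Module.Finite.finite_basis (Basis.sumExtend hw)
    Finite.of_injective (Sum.inr (α := ι)) Sum.inr_injective
  have hv_card := finrank_eq_nat_card_basis (Basis.sumExtend hv)
  have hw_card := finrank_eq_nat_card_basis (Basis.sumExtend hw)
  rw [Nat.card_sum] at hv_card hw_card
  obtain ⟨e⟩ := Finite.card_eq.1 (show Nat.card (Basis.sumExtendIndex hw) =
    Nat.card (Basis.sumExtendIndex hv) by omega)
  refine ⟨(Basis.sumExtend hw).equiv (Basis.sumExtend hv) (Equiv.sumCongr (Equiv.refl ι) e),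
    fun i => ?_⟩
  rw [← Basis.sumExtend_apply_inl hw, Basis.equiv_apply]
  exact Basis.sumExtend_apply_inl hv i

theorem mem_span_iff_finrank_span_insert_eq {K V : Type*} [Field K] [AddCommGroup V] [Module K V]
    [FiniteDimensional K V] {s : Set V} {v : V} :
    v ∈ span K s ↔ finrank K (span K (insert v s)) = finrank K (span K s) := by
  refine ⟨fun h => by rw [span_insert_eq_span h], fun h => ?_⟩
  rw [eq_of_le_of_finrank_le (span_mono (subset_insert v s)) h.le]
  exact subset_span (mem_insert v s)

theorem LinearIndepOn.linearCombination_mem_span_image_diff_iff {ι R V : Type*} [Ring R]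
    [AddCommGroup V] [Module R V] {v : ι → V} {s : Set ι} (hv : LinearIndepOn R v s)
    {l : ι →₀ R} (hl : l ∈ Finsupp.supported R R s) {i : ι} :
    Finsupp.linearCombination R v l ∈ span R (v '' (s \ {i})) ↔ l i = 0 := by
  rw [Finsupp.mem_span_image_iff_linearCombination]
  constructor
  · rintro ⟨l', hl', hl'l⟩
    rw [← linearIndepOn_iffₛ.1 hv l' (Finsupp.supported_mono sdiff_subset hl') l hl hl'l]
    exact Finsupp.notMem_support_iff.1 fun h => (hl' h).2 rfl
  · exact fun hi =>
      ⟨l, fun j hj => ⟨hl hj, fun hji => Finsupp.mem_support_iff.1 hj (hji ▸ hi)⟩, rfl⟩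

theorem LinearIndepOn.eq_of_forall_mem_span_image_diff_iff {ι V : Type*} [AddCommGroup V]
    [Module (ZMod 2) V] {v : ι → V} {s : Set ι} (hv : LinearIndepOn (ZMod 2) v s) {y z : V}
    (hy : y ∈ span (ZMod 2) (v '' s)) (hz : z ∈ span (ZMod 2) (v '' s))
    (h : ∀ i ∈ s, y ∈ span (ZMod 2) (v '' (s \ {i})) ↔ z ∈ span (ZMod 2) (v '' (s \ {i}))) :
    y = z := by
  obtain ⟨ly, hly, rfl⟩ := (Finsupp.mem_span_image_iff_linearCombination _).1 hy
  obtain ⟨lz, hlz, rfl⟩ := (Finsupp.mem_span_image_iff_linearCombination _).1 hz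
  congr 1
  ext i
  by_cases hi : i ∈ s
  · have eq_of_eq_zero_iff : ∀ a b : ZMod 2, (a = 0 ↔ b = 0) → a = b := by decide
    apply eq_of_eq_zero_iff
    rw [← hv.linearCombination_mem_span_image_diff_iff hly,
      ← hv.linearCombination_mem_span_image_diff_iff hlz]
    exact h i hi
  · rw [Finsupp.notMem_support_iff.1 fun h => hi (hly h),
      Finsupp.notMem_support_iff.1 fun h => hi (hlz h)]

theorem mRank_eq_eRk {α : Type*} (M : Matroid α) (S : Set α) : mRank M S = M.eRk S := by
  refine le_antisymm (iSup₂_le fun I hI => hI.1.encard_le_eRk_of_subset hI.2) ?_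
  obtain ⟨I, hI⟩ := M.exists_isBasis' S
  rw [← hI.encard_eq_eRk]
  exact le_iSup₂ (f := fun I (_ : M.Indep I ∧ I ⊆ S) => I.encard) I ⟨hI.indep, hI.subset⟩

theorem Matroid.mem_closure_iff_eRk_insert_eq {α : Type*} {M : Matroid α} {X : Set α} {e : α}
    (he : e ∈ M.E) (hX : M.eRk X ≠ ⊤) : e ∈ M.closure X ↔ M.eRk (insert e X) = M.eRk X := by
  refine ⟨fun h => ?_, fun h => by_contra fun h' => ?_⟩
  · rw [← eRk_insert_closure_eq, insert_eq_of_mem h, eRk_closure_eq]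
  · rw [eRk_insert_eq_add_one ⟨he, h'⟩] at h
    exact ((ENat.lt_add_one_iff hX).2 le_rfl).ne' h

def Matroid.IsRankPreserving {α V : Type*} (M : Matroid α) (K : Type*) [Field K] [AddCommGroup V]
    [Module K V] (f : α → V) : Prop :=
  ∀ S ⊆ M.E, (spanRank K (f '' S) : ℕ∞) = M.eRk S

namespace Matroid.IsRankPreserving

variable {α K V : Type*} [Field K] [AddCommGroup V] [Module K V] [FiniteDimensional K V]
  {M : Matroid α} {f : α → V}

theorem mem_span_image_iff_mem_closure (hf : M.IsRankPreserving K f) {T : Set α} (hT : T ⊆ M.E)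
    {x : α} (hx : x ∈ M.E) : f x ∈ span K (f '' T) ↔ x ∈ M.closure T := by
  rw [mem_span_iff_finrank_span_insert_eq, ← image_insert_eq,
    M.mem_closure_iff_eRk_insert_eq hx (hf T hT ▸ ENat.natCast_ne_top _),
    ← hf T hT, ← hf _ (insert_subset hx hT), Nat.cast_inj]
  rfl

theorem linearIndepOn (hf : M.IsRankPreserving K f) {I : Set α} (hI : M.Indep I) :
    LinearIndepOn K f I :=
  linearIndepOn_iff_notMem_span.2 fun i hi => by
    rw [hf.mem_span_image_iff_mem_closure (sdiff_subset.trans hI.subset_ground)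
      (hI.subset_ground hi)]
    exact hI.notMem_closure_sdiff_of_mem hi

end Matroid.IsRankPreserving

/-- If `f` and `g` are two rank-preserving maps from a matroid `M` into the complete binary
matroid of rank `n` (rank of a set of vectors = dimension of its `𝔽₂`-span), then there is an
`𝔽₂`-linear automorphism `A` of `𝔽₂ⁿ` with `f = A ∘ g` on the ground set of `M`. -/
theorem stmt3 {α : Type*} (n : ℕ) (M : Matroid α) (f g : α → (Fin n → ZMod 2))
    (hf : ∀ S : Set α, S ⊆ M.E → (spanRank (ZMod 2) (f '' S) : ℕ∞) = mRank M S)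
    (hg : ∀ S : Set α, S ⊆ M.E → (spanRank (ZMod 2) (g '' S) : ℕ∞) = mRank M S) :
    ∃ A : (Fin n → ZMod 2) ≃ₗ[ZMod 2] (Fin n → ZMod 2), ∀ x ∈ M.E, f x = A (g x) := by
  replace hf : M.IsRankPreserving (ZMod 2) f := fun S hS => (hf S hS).trans (mRank_eq_eRk M S)
  replace hg : M.IsRankPreserving (ZMod 2) g := fun S hS => (hg S hS).trans (mRank_eq_eRk M S)
  obtain ⟨B, hB⟩ := M.exists_isBase
  have hfB := hf.linearIndepOn hB.indep
  obtain ⟨A, hA⟩ := exists_linearEquiv_apply_eq hfB (hg.linearIndepOn hB.indep)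
  have h_span_iff : ∀ T ⊆ B, ∀ x ∈ M.E,
      A (g x) ∈ span (ZMod 2) (f '' T) ↔ f x ∈ span (ZMod 2) (f '' T) := by
    intro T hTB x hx
    have hT := hTB.trans hB.subset_ground
    have hfT : f '' T = A '' (g '' T) := by
      rw [image_image]
      exact image_congr fun b hb => (hA ⟨b, hTB hb⟩).symm
    have hA_mem_span : A (g x) ∈ span (ZMod 2) (f '' T) ↔ g x ∈ span (ZMod 2) (g '' T) := by
      rw [hfT]
      exact apply_mem_span_image_iff_mem_span (f := A.toLinearMap) A.injective
    rw [hA_mem_span, hg.mem_span_image_iff_mem_closure hT hx,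
      hf.mem_span_image_iff_mem_closure hT hx]
  have hf_mem_span : ∀ x ∈ M.E, f x ∈ span (ZMod 2) (f '' B) := fun x hx =>
    (hf.mem_span_image_iff_mem_closure hB.subset_ground hx).2 (hB.closure_eq ▸ hx)
  refine ⟨A, fun x hx => (hfB.eq_of_forall_mem_span_image_diff_iff ?_ (hf_mem_span x hx)
    fun b _ => h_span_iff _ sdiff_subset x hx).symm⟩
  exact (h_span_iff B subset_rfl x hx).2 (hf_mem_span x hx)
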